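/- arXiv:math/0405349 — 5 statements merged into one kernel-verified Lean document; each statement's English description precedes it below -/
import Mathlib

section
/- For positive integers d_1,...,d_{n-1} and the Tits lattice L = L(1,d_1,...,d_1⋯d_{n-1}), every positive semi-definite symmetric integer n×n matrix C satisfies (d_1⋯d_{n-1})·C ∈ L, and d_1⋯d_{n-1} is the least positive integer λ with the property that λC ∈ L for all positive semi-definite symmetric integer matrices C. -/
open Finset Matrix

theorem Finset.prod_range_dvd_prod_range_of_le {M : Type*} [CommMonoid M] (f : ℕ → M)
    {m k : ℕ} (h : m ≤ k) : ∏ i ∈ range m, f i ∣ ∏ i ∈ range k, f i :=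
  prod_dvd_prod_of_subset _ _ f (range_mono h)

theorem Matrix.posSemidef_of_const_one {ι R : Type*} [Fintype ι] [CommRing R] [PartialOrder R]
    [StarRing R] [StarOrderedRing R] : (of fun _ _ : ι => (1 : R)).PosSemidef := by
  simpa [vecMulVec] using posSemidef_vecMulVec_self_star (1 : ι → R)

/-- For the Tits lattice `L = L(1, d₁, …, d₁⋯d_{n-1})`,
the number `d₁⋯d_{n-1}` is the least positive integer `λ` such that `λ·C ∈ L`
for every positive semi-definite symmetric integer matrix `C`. -/
theorem titsLattice_nu (n : ℕ) (hn : 1 ≤ n) (d : ℕ → ℕ) (hd : ∀ i, 0 < d i) :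
    IsLeast {lam : ℕ | 0 < lam ∧
      ∀ C : Matrix (Fin n) (Fin n) ℤ, C.IsSymm →
        (C.map ((↑) : ℤ → ℝ)).PosSemidef →
        ∀ i j : Fin n,
          ((∏ k ∈ Finset.range (max i.val j.val), d k : ℕ) : ℤ) ∣ (lam : ℤ) * C i j}
      (∏ i ∈ Finset.range (n - 1), d i) := by
  refine ⟨⟨prod_pos fun i _ => hd i, fun C _ _ i j => dvd_mul_of_dvd_left ?_ _⟩, ?_⟩
  · exact_mod_cast prod_range_dvd_prod_range_of_le d (by omega)
  · rintro lam ⟨hlam, hdvd⟩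
    -- The all-ones matrix is the witness: its `(0, n - 1)` entry is `1`.
    have hones := hdvd (of fun _ _ => 1) (by ext; rfl)
      (by simpa [Matrix.map] using posSemidef_of_const_one) ⟨0, by omega⟩ ⟨n - 1, by omega⟩
    simp only [of_apply, mul_one, zero_max] at hones
    exact Nat.le_of_dvd hlam (by exact_mod_cast hones)
end

section
/- Let L = L(1,17) be the lattice of symmetric 2×2 integer matrices ((a,b),(b,c)) with 17 | b and 17 | c, and let f be the quadratic form with matrix ((3, -14/17), (-14/17, 4/17)). Then the minimum of tr(f·h) over all rank-1 positive semi-definite matrices h ∈ L equals 3, while the positive definite matrix h₀ = ((6,17),(17,51)) lies in L and satisfies tr(f·h₀) = 2. In particular, min over all nonzero positive semi-definite h ∈ L of tr(f·h) is strictly smaller than the minimum over rank-1 elements of L. -/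
/-!
A rank-one positive semidefinite integer matrix is `g • v vᵀ` with `g ≥ 1` and `v = (x, y) ≠ 0`,
so `17 · tr(f h) = g (51 x² - 28 x y + 4 y²)`. Since `17 ∣ g y²`, either `17 ∣ g` or `17 ∣ y`, and
in both cases a unimodular change of variables turns this into `17 m (3 u² + 2 u v + 3 v²)` with
`m ≥ 1`; the reduced form `3 u² + 2 u v + 3 v²` of discriminant `-32` is at least `3` off the
origin. The matrix `h₀`, of determinant `17`, is not a multiple of an outer product and escapes
the bound.
-/

theorem Int.exists_mul_sq_of_mul_eq_sq {a b c : ℤ} (h : a * c = b ^ 2) :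
    ∃ g x y : ℤ, a = g * x ^ 2 ∧ b = g * x * y ∧ c = g * y ^ 2 := by
  rcases eq_or_ne a 0 with rfl | ha
  · have hb : b = 0 := by simpa using h.symm
    exact ⟨c, 0, 1, by ring, by simp [hb], by ring⟩
  obtain ⟨d, p, q, hd, hpq, rfl, rfl⟩ := Int.exists_gcd_one' (Int.gcd_pos_of_ne_zero_left b ha)
  have hp : p ≠ 0 := by rintro rfl; simp at ha
  have hpc : p * c = d * q ^ 2 := by
    have : (d : ℤ) * (p * c) = d * (d * q ^ 2) := by linear_combination h
    exact mul_left_cancel₀ (by positivity) this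
  -- `p c = d q²` with `p` coprime to `q` forces `p ∣ d`
  obtain ⟨g, hg⟩ : p ∣ (d : ℤ) :=
    ((Int.isCoprime_iff_gcd_eq_one.mpr hpq).pow_right (n := 2)).dvd_of_dvd_mul_right
      ⟨c, by rw [← hpc]⟩
  refine ⟨g, p, q, by rw [hg]; ring, by rw [hg]; ring, mul_left_cancel₀ hp ?_⟩
  rw [hpc, hg]; ring

theorem three_le_three_sq_add_two_mul_add_three_sq {u v : ℤ} (h : u ≠ 0 ∨ v ≠ 0) :
    3 ≤ 3 * u ^ 2 + 2 * u * v + 3 * v ^ 2 := by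
  have h₁ : 0 < u ^ 2 + v ^ 2 := by
    rcases h with h | h <;> positivity
  have h₂ : 0 < u ^ 2 + u * v + v ^ 2 := by
    nlinarith [sq_nonneg (u + v)]
  linarith

theorem fifty_one_le_of_mul_eq_sq {a b c : ℤ} (ha : 0 ≤ a) (hc : 0 ≤ c) (hdet : a * c = b ^ 2)
    (hc17 : 17 ∣ c) (hne : a ≠ 0 ∨ b ≠ 0 ∨ c ≠ 0) : 51 ≤ 51 * a - 28 * b + 4 * c := by
  obtain ⟨g, x, y, rfl, rfl, rfl⟩ := Int.exists_mul_sq_of_mul_eq_sq hdet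
  have hg : 0 < g := by
    by_contra! hg
    have ha0 : g * x ^ 2 = 0 := le_antisymm (mul_nonpos_of_nonpos_of_nonneg hg (sq_nonneg x)) ha
    have hc0 : g * y ^ 2 = 0 := le_antisymm (mul_nonpos_of_nonpos_of_nonneg hg (sq_nonneg y)) hc
    have hb0 : g * x * y = 0 := by simpa [ha0, hc0] using hdet.symm
    simp [ha0, hb0, hc0] at hne
  have hxy : x ≠ 0 ∨ y ≠ 0 := by
    by_contra! hxy
    simp [hxy.1, hxy.2] at hne
  have bound (m u v : ℤ) (hm : 0 < m) (huv : u ≠ 0 ∨ v ≠ 0) :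
      51 ≤ 17 * m * (3 * u ^ 2 + 2 * u * v + 3 * v ^ 2) := by
    nlinarith [three_le_three_sq_add_two_mul_add_three_sq huv]
  have p17 : Prime (17 : ℤ) := by norm_num
  by_cases h17 : 17 ∣ g
  · obtain ⟨k, rfl⟩ := h17
    -- `51 x² - 28 x y + 4 y² = 3 u² + 2 u v + 3 v²` for the unimodular change `u = 4x - y`, `v = y - 3x`
    have huv : 4 * x - y ≠ 0 ∨ y - 3 * x ≠ 0 := by omega
    convert bound k _ _ (by omega) huv using 1
    ring
  · obtain ⟨z, rfl⟩ := p17.dvd_of_dvd_pow ((p17.dvd_or_dvd hc17).resolve_left h17)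
    -- here the form is `17 g (3 x² - 28 x z + 68 z²)`, and `u = x - 5z`, `v = z` reduces it
    have huv : x - 5 * z ≠ 0 ∨ z ≠ 0 := by omega
    convert bound g _ _ hg huv using 1
    ring

theorem Matrix.map_fin_two {α β : Type*} (f : α → β) (a b c d : α) :
    (!![a, b; c, d]).map f = !![f a, f b; f c, f d] := by
  ext i j; fin_cases i <;> fin_cases j <;> rfl

theorem Matrix.posSemidef_fin_two {a b c : ℝ} (ha : 0 ≤ a) (hc : 0 ≤ c) (hdet : b ^ 2 ≤ a * c) :
    (!![a, b; b, c]).PosSemidef := by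
  refine .of_dotProduct_mulVec_nonneg ?_ fun v => ?_
  · ext i j; fin_cases i <;> fin_cases j <;> rfl
  · simp only [star_trivial, dotProduct, mulVec, Fin.sum_univ_two, cons_val_zero, cons_val_one, of_apply]
    rcases ha.eq_or_lt with rfl | ha
    · obtain rfl : b = 0 := by nlinarith
      nlinarith [mul_nonneg hc (sq_nonneg (v 1))]
    · -- `a · (quadratic form) = (a v₀ + b v₁)² + (ac - b²) v₁²`
      nlinarith [sq_nonneg (a * v 0 + b * v 1), mul_nonneg (sub_nonneg.2 hdet) (sq_nonneg (v 1))]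

theorem Matrix.trace_mul_fin_two {R : Type*} [CommRing R] (p q r s a b c d : R) :
    trace (!![p, q; r, s] * !![a, b; c, d]) = p * a + q * c + r * b + s * d := by
  simp [trace_fin_two]; ring

/-- Counterexample to the Barnes–Cohn inequality for `L = L(1,17)`:
for the form `f` with matrix `((3, -14/17), (-14/17, 4/17))`, the minimum of `tr(f·h)`
over rank-1 positive semi-definite `h ∈ L` equals `3`, while the matrix
`h₀ = ((6,17),(17,51)) ∈ L` is positive semi-definite, nonzero, and satisfies
`tr(f·h₀) = 2 < 3`. -/
theorem counterexample_barnes_cohn :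
    let f : Matrix (Fin 2) (Fin 2) ℝ := !![3, -14/17; -14/17, 4/17]
    let Lmem : Matrix (Fin 2) (Fin 2) ℤ → Prop :=
      fun h => h 0 1 = h 1 0 ∧ (17 : ℤ) ∣ h 0 1 ∧ (17 : ℤ) ∣ h 1 1
    (IsLeast {t : ℝ | ∃ h : Matrix (Fin 2) (Fin 2) ℤ, Lmem h ∧
        (h.map ((↑) : ℤ → ℝ)).PosSemidef ∧ h ≠ 0 ∧ h.det = 0 ∧
        t = Matrix.trace (f * h.map ((↑) : ℤ → ℝ))} 3) ∧
    (Lmem !![6, 17; 17, 51] ∧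
      ((!![6, 17; 17, 51] : Matrix (Fin 2) (Fin 2) ℤ).map ((↑) : ℤ → ℝ)).PosSemidef ∧
      (!![6, 17; 17, 51] : Matrix (Fin 2) (Fin 2) ℤ) ≠ 0 ∧
      Matrix.trace (f * (!![6, 17; 17, 51] : Matrix (Fin 2) (Fin 2) ℤ).map ((↑) : ℤ → ℝ))
        = 2) := by
  intro f Lmem
  have trace_eq (a b c : ℤ) :
      Matrix.trace (f * (!![a, b; b, c] : Matrix (Fin 2) (Fin 2) ℤ).map ((↑) : ℤ → ℝ)) =
        ((51 * a - 28 * b + 4 * c : ℤ) : ℝ) / 17 := by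
    rw [Matrix.map_fin_two, Matrix.trace_mul_fin_two]; push_cast; ring
  refine ⟨⟨⟨!![1, 0; 0, 0], ?_⟩, ?_⟩, ?_⟩
  · refine ⟨by simp [Lmem], ?_, by simp [← Matrix.ext_iff], by simp [Matrix.det_fin_two], ?_⟩
    · rw [Matrix.map_fin_two]; exact Matrix.posSemidef_fin_two (by simp) (by simp) (by simp)
    · rw [trace_eq]; norm_num
  · rintro t ⟨h, ⟨hsym, -, hc17⟩, hpsd, hne, hdet, rfl⟩
    obtain ⟨a, b, c, rfl⟩ : ∃ a b c, h = !![a, b; b, c] := ⟨_, _, _, hsym ▸ h.eta_fin_two⟩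
    have ha : (0 : ℝ) ≤ a := by simpa using hpsd.diag_nonneg (i := 0)
    have hc : (0 : ℝ) ≤ c := by simpa using hpsd.diag_nonneg (i := 1)
    simp only [Matrix.det_fin_two_of, sub_eq_zero] at hdet
    have hne' : a ≠ 0 ∨ b ≠ 0 ∨ c ≠ 0 := by
      simp [← Matrix.ext_iff, Fin.forall_fin_two] at hne; tauto
    have h51 := fifty_one_le_of_mul_eq_sq (by exact_mod_cast ha) (by exact_mod_cast hc)
      (by rw [hdet, sq]) (by simpa using hc17) hne'
    rw [trace_eq, le_div_iff₀ (by norm_num)]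
    exact_mod_cast (by linarith : (3 * 17 : ℤ) ≤ 51 * a - 28 * b + 4 * c)
  · refine ⟨by norm_num [Lmem], ?_, by simp [← Matrix.ext_iff], by rw [trace_eq]; norm_num⟩
    rw [Matrix.map_fin_two]; exact Matrix.posSemidef_fin_two (by simp) (by simp) (by norm_num)
end

section
/- Let t ≥ 3 be an integer, L = L(1,t) the lattice of symmetric 2×2 integer matrices ((a,b),(b,c)) with t | b and t | c, and f any real positive definite binary quadratic form. Then the minimum of (f,h) over all nonzero positive semi-definite h ∈ L is at least √(3/t) times the minimum of (f,h) over rank-1 elements h ∈ L. -/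
/-
If `det h = 0`, then `h` is itself a rank-one element of `L` and `√(3/t) ≤ 1`. Otherwise `det h`
is a positive multiple of `t`, so `(f, h) ≥ 2 √(det f · det h) ≥ 2 √(t · det f)`, the first
inequality being AM-GM for the positive semi-definite matrix `S h Sᵀ` where `f = Sᵀ S`. On the
other side, Hermite's bound gives a nonzero integer vector `v` with `f(v)² ≤ (4/3) det f`, and
`t v vᵀ` is a rank-one element of `L` with `√(3/t) (f, t v vᵀ) = √(3t) f(v) ≤ 2 √(t · det f)`.
-/

open Matrix
open scoped MatrixOrder

theorem Matrix.PosSemidef.two_sqrt_det_le_trace_fin_two {M : Matrix (Fin 2) (Fin 2) ℝ}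
    (hM : M.PosSemidef) : 2 * √M.det ≤ M.trace := by
  have h00 : 0 ≤ M 0 0 := hM.diag_nonneg
  have h11 : 0 ≤ M 1 1 := hM.diag_nonneg
  have hsymm : M 1 0 = M 0 1 := by simpa using hM.1.apply 0 1
  rw [det_fin_two, trace_fin_two, hsymm]
  calc 2 * √(M 0 0 * M 1 1 - M 0 1 * M 0 1) ≤ 2 * √(M 0 0 * M 1 1) := by
        gcongr; nlinarith [mul_self_nonneg (M 0 1)]
    _ = 2 * (√(M 0 0) * √(M 1 1)) := by rw [Real.sqrt_mul h00]
    _ ≤ M 0 0 + M 1 1 := by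
        nlinarith [sq_nonneg (√(M 0 0) - √(M 1 1)), Real.sq_sqrt h00, Real.sq_sqrt h11]

theorem Matrix.PosSemidef.two_sqrt_det_mul_det_le_trace_mul {A H : Matrix (Fin 2) (Fin 2) ℝ}
    (hA : A.PosSemidef) (hH : H.PosSemidef) : 2 * √(A.det * H.det) ≤ (A * H).trace := by
  obtain ⟨B, rfl⟩ := CStarAlgebra.nonneg_iff_eq_star_mul_self.mp hA.nonneg
  have hBHB : (B * H * star B).PosSemidef := hH.mul_mul_conjTranspose_same B
  have htr : (star B * B * H).trace = (B * H * star B).trace := by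
    rw [mul_assoc, trace_mul_comm, mul_assoc]
  have hdet : (star B * B).det * H.det = (B * H * star B).det := by
    simp only [det_mul]; ring
  rw [htr, hdet]
  exact hBHB.two_sqrt_det_le_trace_fin_two

theorem Matrix.rank_lt_card_of_det_eq_zero {n R : Type*} [Fintype n] [DecidableEq n]
    [CommRing R] [IsDomain R] [IsNoetherianRing R] {M : Matrix n n R} (hM : M.det = 0) :
    M.rank < Fintype.card n := by
  obtain ⟨v, hv, hMv⟩ := exists_mulVec_eq_zero_iff.mpr hM
  have hker : 1 ≤ Module.finrank R (LinearMap.ker M.mulVecLin) :=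
    Submodule.one_le_finrank_iff.mpr fun h => hv <| by
      simpa [h] using (show v ∈ LinearMap.ker M.mulVecLin from hMv)
  have hrn := M.mulVecLin.rank_range_add_rank_ker
  rw [← Module.finrank_eq_rank, ← Module.finrank_eq_rank, ← Module.finrank_eq_rank,
    ← Nat.cast_add, Nat.cast_inj, Module.finrank_fintype_fun_eq_card] at hrn
  rw [Matrix.rank]
  omega

theorem Matrix.one_le_rank_of_ne_zero {m n R : Type*} [Fintype n] [Finite m]
    [CommRing R] [IsDomain R] [IsNoetherianRing R] {M : Matrix m n R} (hM : M ≠ 0) :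
    1 ≤ M.rank := by
  classical
  rw [Matrix.rank, Submodule.one_le_finrank_iff, Ne, LinearMap.range_eq_bot,
    ← Matrix.toLin'_apply', LinearEquiv.map_eq_zero_iff]
  exact hM

theorem Matrix.dvd_det_of_dvd_col {n R : Type*} [Fintype n] [DecidableEq n] [CommRing R]
    (M : Matrix n n R) (j : n) {c : R} (h : ∀ i, c ∣ M i j) : c ∣ M.det := by
  choose w hw using h
  have hM : M = updateCol M j (c • w) := by
    ext i k
    by_cases hk : k = j
    · simp [hk, hw]
    · simp [hk]
  rw [hM, det_updateCol_smul]
  exact dvd_mul_right _ _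

theorem Matrix.rank_eq_one_of_det_eq_zero {R : Type*} [CommRing R] [IsDomain R]
    [IsNoetherianRing R] {M : Matrix (Fin 2) (Fin 2) R} (hM : M ≠ 0) (hdet : M.det = 0) :
    M.rank = 1 := by
  have hlt := M.rank_lt_card_of_det_eq_zero hdet
  rw [Fintype.card_fin] at hlt
  have hpos := M.one_le_rank_of_ne_zero hM
  omega

theorem Matrix.PosDef.fin_two {A : Matrix (Fin 2) (Fin 2) ℝ} (hA : A.PosDef) :
    0 < A 0 0 ∧ A 1 0 = A 0 1 ∧ A 0 1 ^ 2 < A 0 0 * A 1 1 := by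
  have hsymm : A 1 0 = A 0 1 := by simpa using hA.1.apply 0 1
  have hdet := hA.det_pos
  rw [det_fin_two, hsymm] at hdet
  exact ⟨hA.diag_pos, hsymm, by nlinarith⟩

def binaryForm (α β γ : ℝ) (v : Fin 2 → ℤ) : ℝ :=
  α * (v 0 : ℝ) ^ 2 + 2 * β * (v 0 : ℝ) * (v 1 : ℝ) + γ * (v 1 : ℝ) ^ 2

def binaryPolar (α β γ : ℝ) (v w : Fin 2 → ℤ) : ℝ :=
  α * (v 0 : ℝ) * (w 0 : ℝ) + β * ((v 0 : ℝ) * (w 1 : ℝ) + (v 1 : ℝ) * (w 0 : ℝ)) +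
    γ * (v 1 : ℝ) * (w 1 : ℝ)

theorem binaryPolar_add_smul {α β γ : ℝ} (v w : Fin 2 → ℤ) (k : ℤ) :
    binaryPolar α β γ v (w + k • v) = binaryPolar α β γ v w + k * binaryForm α β γ v := by
  simp only [binaryPolar, binaryForm, Pi.add_apply, Pi.smul_apply, smul_eq_mul]; push_cast; ring

namespace binaryForm

variable {α β γ : ℝ}

theorem smul (n : ℤ) (v : Fin 2 → ℤ) :
    binaryForm α β γ (n • v) = n ^ 2 * binaryForm α β γ v := by
  simp only [binaryForm, Pi.smul_apply, smul_eq_mul]; push_cast; ring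

theorem mul_binaryForm (v w : Fin 2 → ℤ) :
    binaryForm α β γ v * binaryForm α β γ w =
      binaryPolar α β γ v w ^ 2 + (α * γ - β ^ 2) * ((v 0 * w 1 - v 1 * w 0 : ℤ) : ℝ) ^ 2 := by
  simp only [binaryForm, binaryPolar]; push_cast; ring

theorem sq_add_sq_mul_le (v : Fin 2 → ℤ) :
    (α * γ - β ^ 2) * ((v 0 : ℝ) ^ 2 + (v 1 : ℝ) ^ 2) ≤ (α + γ) * binaryForm α β γ v := by
  have : (α + γ) * binaryForm α β γ v - (α * γ - β ^ 2) * ((v 0 : ℝ) ^ 2 + (v 1 : ℝ) ^ 2) =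
      (α * v 0 + β * v 1) ^ 2 + (β * v 0 + γ * v 1) ^ 2 := by
    unfold binaryForm; ring
  linarith [sq_nonneg (α * v 0 + β * v 1), sq_nonneg (β * v 0 + γ * v 1)]

theorem pos (hα : 0 < α) (hD : β ^ 2 < α * γ) {v : Fin 2 → ℤ} (hv : v ≠ 0) :
    0 < binaryForm α β γ v := by
  have hγ : 0 < γ := by nlinarith [sq_nonneg β]
  have hv' : (0 : ℝ) < (v 0 : ℝ) ^ 2 + (v 1 : ℝ) ^ 2 := by
    obtain ⟨i, hi⟩ := Function.ne_iff.mp hv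
    have hi' : (v i : ℝ) ≠ 0 := by exact_mod_cast hi
    fin_cases i <;> simp at hi' <;> positivity
  nlinarith [sq_add_sq_mul_le (α := α) (β := β) (γ := γ) v, mul_pos (sub_pos.2 hD) hv']

theorem finite_setOf_le (hα : 0 < α) (hD : β ^ 2 < α * γ) (C : ℝ) :
    {v | binaryForm α β γ v ≤ C}.Finite := by
  set N : ℤ := ⌈(α + γ) * C / (α * γ - β ^ 2)⌉
  have hγ : 0 < γ := by nlinarith [sq_nonneg β]
  refine (Set.finite_Icc (fun _ => -N) (fun _ => N)).subset fun v hv => ?_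
  have hsq : ∀ i, v i ^ 2 ≤ N := fun i => by
    have hsum := sq_add_sq_mul_le (α := α) (β := β) (γ := γ) v
    have hC : (α + γ) * binaryForm α β γ v ≤ (α + γ) * C :=
      mul_le_mul_of_nonneg_left hv (by positivity)
    have hK : ((v i ^ 2 : ℤ) : ℝ) ≤ (α + γ) * C / (α * γ - β ^ 2) := by
      rw [le_div_iff₀ (sub_pos.2 hD)]
      fin_cases i <;> push_cast <;> nlinarith [sq_nonneg (v 0 : ℝ), sq_nonneg (v 1 : ℝ)]
    exact_mod_cast hK.trans (Int.le_ceil _)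
  exact ⟨fun i => by linarith [Int.le_self_sq (-v i), hsq i, neg_sq (v i)],
    fun i => by linarith [Int.le_self_sq (v i), hsq i]⟩

theorem exists_isMinOn (hα : 0 < α) (hD : β ^ 2 < α * γ) :
    ∃ v ≠ 0, IsMinOn (binaryForm α β γ) {0}ᶜ v := by
  set e : Fin 2 → ℤ := Pi.single 0 1
  have he : e ≠ 0 := by simp [e]
  obtain ⟨v, ⟨hv, -⟩, hmin⟩ := Set.exists_min_image
    ({v | v ≠ 0} ∩ {v | binaryForm α β γ v ≤ binaryForm α β γ e}) (binaryForm α β γ)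
    ((finite_setOf_le hα hD _).inter_of_right _) ⟨e, he, le_rfl (a := binaryForm α β γ e)⟩
  refine ⟨v, hv, fun w hw => ?_⟩
  by_cases hwe : binaryForm α β γ w ≤ binaryForm α β γ e
  · exact hmin w ⟨hw, hwe⟩
  · exact (hmin e ⟨he, le_rfl (a := binaryForm α β γ e)⟩).trans (not_le.mp hwe).le

theorem isCoprime_of_isMinOn (hα : 0 < α) (hD : β ^ 2 < α * γ) {v : Fin 2 → ℤ} (hv : v ≠ 0)
    (hmin : IsMinOn (binaryForm α β γ) {0}ᶜ v) : IsCoprime (v 0) (v 1) := by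
  have hgcd : 0 < Int.gcd (v 0) (v 1) := Int.gcd_pos_iff.mpr <| by
    by_contra! h
    exact hv (funext fun i => by fin_cases i <;> simp [h.1, h.2])
  obtain ⟨g, a, b, hg, hab, ha, hb⟩ := Int.exists_gcd_one' hgcd
  set w : Fin 2 → ℤ := ![a, b]
  have hvw : v = (g : ℤ) • w := by
    ext i; fin_cases i <;> simp [w, ha, hb, mul_comm]
  have hw : w ≠ 0 := fun h => hv (by rw [hvw, h, smul_zero])
  have hle : binaryForm α β γ v ≤ binaryForm α β γ w := hmin hw
  rw [hvw, smul] at hle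
  have hg1 : g = 1 := by
    have hQw := pos hα hD hw
    have hg2 : ((g : ℤ) : ℝ) ^ 2 ≤ 1 := (mul_le_iff_le_one_left hQw).mp hle
    have : g ^ 2 ≤ 1 := by exact_mod_cast hg2
    nlinarith
  rw [Int.isCoprime_iff_gcd_eq_one, ha, hb, hg1]
  simpa using hab

theorem exists_det_eq_one_abs_binaryPolar_le {v : Fin 2 → ℤ} (hv : IsCoprime (v 0) (v 1))
    (hQ : 0 < binaryForm α β γ v) :
    ∃ w : Fin 2 → ℤ, v 0 * w 1 - v 1 * w 0 = 1 ∧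
      |binaryPolar α β γ v w| ≤ binaryForm α β γ v / 2 := by
  obtain ⟨x, y, hxy⟩ := hv
  set w₀ : Fin 2 → ℤ := ![-y, x]
  set k : ℤ := round (-binaryPolar α β γ v w₀ / binaryForm α β γ v)
  refine ⟨w₀ + k • v, by simp [w₀]; linear_combination hxy, ?_⟩
  have hround := abs_sub_round (-binaryPolar α β γ v w₀ / binaryForm α β γ v)
  have : binaryPolar α β γ v (w₀ + k • v) = -(binaryForm α β γ v *
      (-binaryPolar α β γ v w₀ / binaryForm α β γ v - k)) := by
    rw [binaryPolar_add_smul]; field_simp; ring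
  rw [this, abs_neg, abs_mul, abs_of_pos hQ]
  linarith [mul_le_mul_of_nonneg_left hround hQ.le]

theorem sq_le_of_isMinOn (hα : 0 < α) (hD : β ^ 2 < α * γ) {v : Fin 2 → ℤ} (hv : v ≠ 0)
    (hmin : IsMinOn (binaryForm α β γ) {0}ᶜ v) :
    binaryForm α β γ v ^ 2 ≤ 4 / 3 * (α * γ - β ^ 2) := by
  -- For the reduced partner `w` of `v`, with `Q = binaryForm` and `P = binaryPolar`:
  -- `Q(v)² ≤ Q(v) Q(w) = P(v, w)² + (αγ - β²) ≤ Q(v)² / 4 + (αγ - β²)`.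
  have hQ := pos hα hD hv
  obtain ⟨w, hdet, hP⟩ :=
    exists_det_eq_one_abs_binaryPolar_le (isCoprime_of_isMinOn hα hD hv hmin) hQ
  have hw : w ≠ 0 := by rintro rfl; simp at hdet
  have hle : binaryForm α β γ v ≤ binaryForm α β γ w := hmin hw
  have hmul := mul_binaryForm (α := α) (β := β) (γ := γ) v w
  rw [hdet, Int.cast_one, one_pow, mul_one] at hmul
  have hP2 := sq_le_sq' (abs_le.mp hP).1 (abs_le.mp hP).2
  nlinarith [mul_le_mul_of_nonneg_left hle hQ.le]

theorem exists_sq_le (hα : 0 < α) (hD : β ^ 2 < α * γ) :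
    ∃ v ≠ 0, binaryForm α β γ v ^ 2 ≤ 4 / 3 * (α * γ - β ^ 2) :=
  let ⟨v, hv, hmin⟩ := exists_isMinOn hα hD
  ⟨v, hv, sq_le_of_isMinOn hα hD hv hmin⟩

end binaryForm

def rankOneTraces (t : ℕ) (A : Matrix (Fin 2) (Fin 2) ℝ) : Set ℝ :=
  {r : ℝ | ∃ B : Matrix (Fin 2) (Fin 2) ℤ,
    B.IsSymm ∧ (t : ℤ) ∣ B 0 1 ∧ (t : ℤ) ∣ B 1 1 ∧
    (B.map ((↑) : ℤ → ℝ)).PosSemidef ∧ B.rank = 1 ∧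
    r = Matrix.trace (A * B.map ((↑) : ℤ → ℝ))}

theorem nonneg_of_mem_rankOneTraces {t : ℕ} {A : Matrix (Fin 2) (Fin 2) ℝ} (hA : A.PosSemidef)
    {r : ℝ} (hr : r ∈ rankOneTraces t A) : 0 ≤ r := by
  obtain ⟨B, -, -, -, hB, -, rfl⟩ := hr
  exact (mul_nonneg zero_le_two (Real.sqrt_nonneg _)).trans
    (hA.two_sqrt_det_mul_det_le_trace_mul hB)

theorem mul_binaryForm_mem_rankOneTraces {t : ℕ} (ht : t ≠ 0) {A : Matrix (Fin 2) (Fin 2) ℝ}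
    (hA : A 1 0 = A 0 1) {v : Fin 2 → ℤ} (hv : v ≠ 0) :
    (t : ℝ) * binaryForm (A 0 0) (A 0 1) (A 1 1) v ∈ rankOneTraces t A := by
  set B : Matrix (Fin 2) (Fin 2) ℤ := of fun i j => (t : ℤ) * (v i * v j)
  have hBmap : B.map ((↑) : ℤ → ℝ) =
      (t : ℝ) • vecMulVec (fun i => (v i : ℝ)) (fun i => (v i : ℝ)) := by
    ext i j; simp [B, vecMulVec_apply]
  have hB : B ≠ 0 := by
    obtain ⟨i, hi⟩ := Function.ne_iff.mp hv
    exact fun h => hi (by simpa [B, ht] using congrFun (congrFun h i) i)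
  refine ⟨B, ?_, ⟨v 0 * v 1, rfl⟩, ⟨v 1 * v 1, rfl⟩, ?_, rank_eq_one_of_det_eq_zero hB ?_, ?_⟩
  · ext i j; simp [B, mul_comm]
  · rw [hBmap]
    exact (posSemidef_vecMulVec_self_star _).smul (Nat.cast_nonneg t)
  · simp [B, det_fin_two]; ring
  · simp only [binaryForm, trace_fin_two, mul_apply, Fin.sum_univ_two, map_apply, B, of_apply,
      hA]
    push_cast; ring

theorem sqrt_three_div_mul_le {t m D d : ℝ} (ht : 0 < t) (hm : 0 ≤ m) (hmD : m ^ 2 ≤ 4 / 3 * D)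
    (htd : t ≤ d) : √(3 / t) * (t * m) ≤ 2 * √(D * d) := by
  have hD : 0 ≤ D := by nlinarith
  calc √(3 / t) * (t * m) = √(3 / t * (t * m) ^ 2) := by
        rw [Real.sqrt_mul' _ (sq_nonneg _), Real.sqrt_sq (by positivity)]
    _ ≤ √(2 ^ 2 * (D * d)) := by
        apply Real.sqrt_le_sqrt
        rw [div_mul_eq_mul_div, div_le_iff₀ ht]
        nlinarith [mul_le_mul_of_nonneg_left htd hD, mul_le_mul_of_nonneg_left hmD ht.le]
    _ = 2 * √(D * d) := by rw [Real.sqrt_mul (by positivity), Real.sqrt_sq zero_le_two]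

/-- **(1,t)-polarisation.** For `t ≥ 3`, `L = L(1,t)` the lattice of
symmetric integer 2×2 matrices `((a,b),(b,c))` with `t ∣ b` and `t ∣ c`, and any real
positive definite binary form `f`, the minimum of `(f,h)` over nonzero positive
semi-definite `h ∈ L` is at least `√(3/t)` times the minimum over rank-1 `h ∈ L`. -/
theorem barnes_cohn_one_t (t : ℕ) (ht : 3 ≤ t)
    (A : Matrix (Fin 2) (Fin 2) ℝ) (hA : A.PosDef) :
    ∀ h : Matrix (Fin 2) (Fin 2) ℤ,
      h.IsSymm → (t : ℤ) ∣ h 0 1 → (t : ℤ) ∣ h 1 1 →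
      (h.map ((↑) : ℤ → ℝ)).PosSemidef → h ≠ 0 →
      Real.sqrt (3 / (t : ℝ)) *
          sInf {r : ℝ | ∃ B : Matrix (Fin 2) (Fin 2) ℤ,
            B.IsSymm ∧ (t : ℤ) ∣ B 0 1 ∧ (t : ℤ) ∣ B 1 1 ∧
            (B.map ((↑) : ℤ → ℝ)).PosSemidef ∧ B.rank = 1 ∧
            r = Matrix.trace (A * B.map ((↑) : ℤ → ℝ))}
        ≤ Matrix.trace (A * h.map ((↑) : ℤ → ℝ)) := by
  intro h hsym ht01 ht11 hpsd hne
  change √(3 / t) * sInf (rankOneTraces t A) ≤ _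
  have hS_nonneg : ∀ r ∈ rankOneTraces t A, 0 ≤ r :=
    fun r hr => nonneg_of_mem_rankOneTraces hA.posSemidef hr
  have hdet : (h.map ((↑) : ℤ → ℝ)).det = h.det := ((Int.castRingHom ℝ).map_det h).symm
  have htR : (3 : ℝ) ≤ t := by exact_mod_cast ht
  rcases hpsd.det_nonneg.eq_or_lt with hdet0 | hdetpos
  · have hrank : h.rank = 1 := rank_eq_one_of_det_eq_zero hne (by exact_mod_cast hdet ▸ hdet0.symm)
    have hmem : (A * h.map ((↑) : ℤ → ℝ)).trace ∈ rankOneTraces t A :=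
      ⟨h, hsym, ht01, ht11, hpsd, hrank, rfl⟩
    have hsqrt : √(3 / t) ≤ 1 := Real.sqrt_le_one.mpr ((div_le_one (by linarith)).mpr htR)
    calc √(3 / t) * sInf (rankOneTraces t A) ≤ sInf (rankOneTraces t A) :=
          mul_le_of_le_one_left (Real.sInf_nonneg hS_nonneg) hsqrt
      _ ≤ _ := csInf_le ⟨0, hS_nonneg⟩ hmem
  · obtain ⟨hα, hsymA, hD⟩ := hA.fin_two
    obtain ⟨v, hv, hvD⟩ := binaryForm.exists_sq_le hα hD
    have htdet : (t : ℝ) ≤ (h.map ((↑) : ℤ → ℝ)).det := by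
      rw [hdet] at hdetpos ⊢
      exact_mod_cast Int.le_of_dvd (by exact_mod_cast hdetpos)
        (h.dvd_det_of_dvd_col 1 (Fin.forall_fin_two.mpr ⟨ht01, ht11⟩))
    have hmem := mul_binaryForm_mem_rankOneTraces (t := t) (by omega) hsymA hv
    calc √(3 / t) * sInf (rankOneTraces t A)
        ≤ √(3 / t) * (t * binaryForm (A 0 0) (A 0 1) (A 1 1) v) := by
          gcongr; exact csInf_le ⟨0, hS_nonneg⟩ hmem
      _ ≤ 2 * √(A.det * (h.map ((↑) : ℤ → ℝ)).det) := by
          refine sqrt_three_div_mul_le (by linarith) (binaryForm.pos hα hD hv).le ?_ htdet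
          rwa [det_fin_two, hsymA, ← sq]
      _ ≤ _ := hA.posSemidef.two_sqrt_det_mul_det_le_trace_mul hpsd
end

section
/- For any vector v = (v_1,...,v_n) ∈ ℤⁿ with n ≥ 2 and any prescribed integers in the strictly-upper-triangular positions above the subdiagonal (columns 2 to n-1), there exists an integer n×n matrix T whose last column is v, whose (i,j) entries for 2 ≤ j ≤ n-1 and i < j are the prescribed values, and whose first column can be chosen so that det(T) = gcd(v_1,...,v_n). -/
/-!
Write `v = g • w` with `g = gcd v` and `w` primitive; putting `v` back into the last column
multiplies the determinant by `g`, so it suffices to reach determinant `1` for `w`.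
Take `T = M * A` with `A` unitriangular, carrying the prescribed entries, with last column `eₙ`,
and `M` whose first `n - 2` rows are `eᵢ + wᵢ eₙ`: then `T` has the prescribed entries, last
column `w` and `det T = det M`. By a Schur complement, `det M` is the determinant of a `2 × 2`
matrix with last column `(wₙ₋₁ + s d, wₙ + t d)`, where `d` is any combination of
`w₁, …, wₙ₋₂`. Taking `d` from a Bézout relation for `w`, the stable range property of `ℤ`
gives `s, t` making these two entries coprime, and the first column completes them to a
matrix of determinant `1`.
-/

open Matrix Fin

open UniqueFactorizationMonoid in
theorem Int.exists_isCoprime_add_mul {a b c : ℤ} (ha : a ≠ 0)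
    (h : ∀ p : ℤ, Prime p → p ∣ a → p ∣ b → ¬p ∣ c) : ∃ m, IsCoprime a (b + m * c) := by
  -- `m` is the product of the prime factors of `a` not dividing `b`
  let S := (normalizedFactors a).toFinset.filter (¬· ∣ b)
  refine ⟨∏ q ∈ S, q, isCoprime_of_prime_dvd (fun h0 => ha h0.1) fun p hp hpa hpbm => ?_⟩
  obtain ⟨q, hq, hpq⟩ := exists_mem_normalizedFactors_of_dvd ha hp.irreducible hpa
  by_cases hpb : p ∣ b
  · have hpmc : p ∣ (∏ q ∈ S, q) * c := (dvd_add_right hpb).1 hpbm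
    rcases hp.dvd_or_dvd hpmc with hpm | hpc
    · obtain ⟨r, hr, hpr⟩ := (hp.dvd_finsetProd_iff _).1 hpm
      have hrS := Finset.mem_filter.1 hr
      have hr' : Prime r := prime_of_normalized_factor r (Multiset.mem_toFinset.1 hrS.1)
      exact hrS.2 ((hp.associated_of_dvd hr' hpr).symm.dvd.trans hpb)
    · exact h p hp hpa hpb hpc
  · have hqS : q ∈ S := Finset.mem_filter.2
      ⟨Multiset.mem_toFinset.2 hq, fun hqb => hpb (hpq.dvd.trans hqb)⟩
    have hpm : p ∣ ∏ q ∈ S, q := hpq.dvd.trans (Finset.dvd_prod_of_mem _ hqS)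
    exact hpb ((dvd_add_left (hpm.mul_right c)).1 hpbm)

theorem Int.exists_isCoprime_add_mul_add_mul {b c d : ℤ}
    (h : ∀ p : ℤ, Prime p → p ∣ b → p ∣ c → ¬p ∣ d) :
    ∃ s t, IsCoprime (b + s * d) (c + t * d) := by
  rcases eq_or_ne d 0 with rfl | hd
  · refine ⟨0, 0, ?_⟩
    simp only [mul_zero, add_zero]
    refine isCoprime_of_prime_dvd ?_ fun p hp hpb hpc => h p hp hpb hpc (dvd_zero p)
    rintro ⟨rfl, rfl⟩
    exact h 2 Int.prime_two (dvd_zero 2) (dvd_zero 2) (dvd_zero 2)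
  obtain ⟨s, hs⟩ : ∃ s, b + s * d ≠ 0 := by
    rcases eq_or_ne b 0 with rfl | hb
    · exact ⟨1, by simpa using hd⟩
    · exact ⟨0, by simpa using hb⟩
  obtain ⟨t, ht⟩ := Int.exists_isCoprime_add_mul hs fun p hp hpb hpc hpd =>
    h p hp ((dvd_add_left (hpd.mul_left s)).1 hpb) hpc hpd
  exact ⟨s, t, ht⟩

theorem Int.exists_isCoprime_add_mul_sum_of_gcd_eq_one {m : ℕ} {v : Fin (m + 2) → ℤ}
    (hv : Finset.univ.gcd v = 1) :
    ∃ (c : Fin m → ℤ) (s t : ℤ), IsCoprime (v (natAdd m 0) + s * ∑ i, v (castAdd 2 i) * c i)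
      (v (last (m + 1)) + t * ∑ i, v (castAdd 2 i) * c i) := by
  obtain ⟨c, hc⟩ := Finset.univ.gcd_eq_sum_mul v
  rw [hv, Fin.sum_univ_add, Fin.sum_univ_two] at hc
  refine ⟨fun i => c (castAdd 2 i), Int.exists_isCoprime_add_mul_add_mul
    fun p hp hp₀ hp₁ hpd => hp.not_dvd_one ?_⟩
  rw [hc]
  exact dvd_add hpd (dvd_add (hp₀.mul_right _) (hp₁.mul_right _))

theorem Matrix.exists_det_eq_one_of_isCoprime {R : Type*} [CommRing R] {m : ℕ}
    (v : Fin (m + 2) → R) (c : Fin m → R) (s t : R)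
    (h : IsCoprime (v (natAdd m 0) + s * ∑ i, v (castAdd 2 i) * c i)
      (v (last (m + 1)) + t * ∑ i, v (castAdd 2 i) * c i)) :
    ∃ M : Matrix (Fin (m + 2)) (Fin (m + 2)) R,
      (∀ i k : Fin (m + 2), (i : ℕ) < m → k ≠ last (m + 1) → M i k = (1 : Matrix _ _ R) i k) ∧
      (∀ i, M i (last (m + 1)) = v i) ∧ M.det = 1 := by
  obtain ⟨x, y, hxy⟩ := h
  have hlast : natAdd m (1 : Fin 2) = last (m + 1) := rfl
  let B : Matrix (Fin m) (Fin 2) R := vecMulVec (fun i => v (castAdd 2 i)) ![0, 1]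
  let C : Matrix (Fin 2) (Fin m) R := vecMulVec ![-s, -t] c
  let D : Matrix (Fin 2) (Fin 2) R := !![y, v (natAdd m 0); -x, v (last (m + 1))]
  -- `det (fromBlocks 1 B C D) = det (D - C * B)`, and `C * B` only shifts the last column of `D`
  refine ⟨reindex finSumFinEquiv finSumFinEquiv (fromBlocks 1 B C D), ?_, ?_, ?_⟩
  · intro i k hi hk
    obtain ⟨i, rfl⟩ : ∃ i' : Fin m, i = castAdd 2 i' := ⟨⟨i, hi⟩, rfl⟩
    induction k using Fin.addCases (m := m) (n := 2) with
    | left k => simp [one_apply]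
    | right r =>
      fin_cases r
      · simp [B, Fin.ext_iff, i.is_lt.ne]
      · exact absurd hlast hk
  · intro i
    rw [← hlast]
    induction i using Fin.addCases (m := m) (n := 2) with
    | left i => simp [B]
    | right r => fin_cases r <;> simp [D, ← hlast]
  · rw [det_reindex_self, det_fromBlocks_one₁₁, det_fin_two, vecMulVec_mul_vecMulVec,
      dotProduct_comm]
    simp [D, dotProduct]
    linear_combination hxy

theorem Matrix.exists_prescribed_above_diagonal_det_eq {R : Type*} [CommRing R] {m : ℕ}
    (M : Matrix (Fin (m + 2)) (Fin (m + 2)) R)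
    (hM : ∀ i k : Fin (m + 2), (i : ℕ) < m → k ≠ last (m + 1) → M i k = (1 : Matrix _ _ R) i k)
    (a : Fin (m + 2) → Fin (m + 2) → R) :
    ∃ T : Matrix (Fin (m + 2)) (Fin (m + 2)) R,
      (∀ i, T i (last (m + 1)) = M i (last (m + 1))) ∧
      (∀ i j, j ≠ last (m + 1) → i < j → T i j = a i j) ∧ T.det = M.det := by
  let A : Matrix (Fin (m + 2)) (Fin (m + 2)) R :=
    of fun i j => if i = j then 1 else if i < j ∧ j ≠ last (m + 1) then a i j else 0
  have hA : A.det = 1 := by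
    rw [det_of_isUpperTriangular fun i j (hji : j < i) => ?_]
    · simp [A]
    · simp [A, hji.ne', hji.not_gt]
  -- the last row of `A` is that of `1`, so the rows `i < m` of `M * A` are those of `A`
  refine ⟨M * A, fun i => ?_, fun i j hj hij => ?_, by rw [det_mul, hA, mul_one]⟩
  · rw [mul_apply, Finset.sum_eq_single (last (m + 1))]
    · simp [A]
    · intro k _ hk
      simp [A, hk]
    · simp
  · have hi : (i : ℕ) < m := by
      have := Fin.val_lt_last hj
      omega
    rw [mul_apply, Finset.sum_eq_single i]
    · simp [A, hM i i hi (ne_last_of_lt hij), hij, hij.ne, hj]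
    · intro k _ hki
      by_cases hk : k = last (m + 1)
      · simp [A, hk, hj.symm, not_lt_of_ge (le_last j)]
      · simp [hM i k hi hk, Ne.symm hki]
    · simp

theorem Matrix.exists_prescribed_above_diagonal_det_eq_gcd {m : ℕ} (v : Fin (m + 2) → ℤ)
    (a : Fin (m + 2) → Fin (m + 2) → ℤ) :
    ∃ T : Matrix (Fin (m + 2)) (Fin (m + 2)) ℤ,
      (∀ i, T i (last (m + 1)) = v i) ∧
      (∀ i j, j ≠ last (m + 1) → i < j → T i j = a i j) ∧ T.det = Finset.univ.gcd v := by
  obtain ⟨w, hvw, hw⟩ := Finset.univ.extract_gcd v Finset.univ_nonempty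
  generalize Finset.univ.gcd v = g at hvw ⊢
  obtain ⟨c, s, t, hcst⟩ := Int.exists_isCoprime_add_mul_sum_of_gcd_eq_one hw
  obtain ⟨M, hM, hMw, hMdet⟩ := exists_det_eq_one_of_isCoprime w c s t hcst
  obtain ⟨T, hTv, hTa, hTdet⟩ := exists_prescribed_above_diagonal_det_eq
    (M.updateCol (last (m + 1)) v) (fun i k hi hk => by rw [updateCol_ne hk, hM i k hi hk]) a
  refine ⟨T, fun i => by rw [hTv, updateCol_self], hTa, ?_⟩
  have hv : v = g • fun i => M i (last (m + 1)) := by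
    ext i
    simp [hMw, hvw]
  rw [hTdet, hv, det_updateCol_smul, updateCol_eq_self, hMdet, mul_one]

/-- **matrix completion.** For any `v ∈ ℤⁿ` (`n ≥ 2`) and any prescribed
integer entries `a i j` for the positions `i < j` in columns `2 ≤ j+1 ≤ n-1`, there is an
integer matrix `T` whose last column is `v`, whose entries at those prescribed positions
are the `a i j`, and with `det T = gcd(v₁, …, vₙ)`. -/
theorem matrix_completion (n : ℕ) (hn : 2 ≤ n) (v : Fin n → ℤ)
    (a : Fin n → Fin n → ℤ) :
    ∃ T : Matrix (Fin n) (Fin n) ℤ,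
      (∀ i : Fin n, T i ⟨n - 1, by omega⟩ = v i) ∧
      (∀ i j : Fin n, 1 ≤ j.val → j.val ≤ n - 2 → i < j → T i j = a i j) ∧
      T.det = Finset.univ.gcd v := by
  obtain ⟨m, rfl⟩ : ∃ m, n = m + 2 := ⟨n - 2, by omega⟩
  obtain ⟨T, hTv, hTa, hTdet⟩ := exists_prescribed_above_diagonal_det_eq_gcd v a
  refine ⟨T, hTv, fun i j _ hj hij => hTa i j (fun h => ?_) hij, hTdet⟩
  rw [h, val_last] at hj
  omega
end

section
/- Let k ∈ ℕ and let d_1,...,d_k be pairwise coprime positive integers. Let c_1,...,c_k and b_1,...,b_k be integers with b_i | c_i | d_i for all i. Then the number of k-tuples (x_1,...,x_k) with 0 ≤ x_i < d_1⋯d_i for each i and gcd(c_1⋯c_k, x_1·c_2⋯c_k, x_2·c_3⋯c_k, ..., x_{k-1}·c_k, x_k) = b_1⋯b_k equals ∏_{i=1}^k φ_{k+1-i}(c_i/b_i)·(d_i/c_i)^{k+1-i}, where φ_m(n) := #{(y_1,...,y_m) ∈ {0,...,n-1}^m : gcd(y_1,...,y_m,n) = 1}. -/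
/-!
Because the `cⱼ` are pairwise coprime, `gcd(c₁⋯c_k, G) = b₁⋯b_k` holds iff `gcd(cⱼ, G) = bⱼ`
for every `j`. The factor `cⱼ` divides `xᵢ·cᵢ₊₁⋯c_k` when `i < j` and is coprime to the cofactor
`cᵢ₊₁⋯c_k` when `i ≥ j`, so this says `gcd(cⱼ, xⱼ, …, x_k) = bⱼ`, a condition that only sees the
residues `xᵢ mod dⱼ`. By the Chinese remainder theorem `xᵢ ↦ (xᵢ mod dⱼ)_{j ≤ i}` is a bijection
from `[0, d₁⋯dᵢ)` onto `∏_{j ≤ i} [0, dⱼ)`, so the count factors over `j` into the number of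
`(k+1-j)`-tuples `y` mod `dⱼ` with `gcd(cⱼ, y) = bⱼ`. Writing `y = bⱼ r + cⱼ q` with `r` mod
`cⱼ/bⱼ` and `q` mod `dⱼ/cⱼ`, that number is `φ_{k+1-j}(cⱼ/bⱼ)·(dⱼ/cⱼ)^{k+1-j}`.
-/

/-- The generalised Euler function (Jordan totient):
`φ_m(n) = #{(y₁,…,y_m) ∈ {0,…,n-1}^m : gcd(y₁,…,y_m,n) = 1}`. -/
def jordanPhi (m n : ℕ) : ℕ :=
  (Finset.univ.filter fun y : Fin m → Fin n =>
    Nat.gcd (Finset.univ.gcd fun i => (y i).val) n = 1).card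

open Finset Function

namespace Nat

theorem gcd_mod_of_dvd {a n : ℕ} (x : ℕ) (h : a ∣ n) : gcd a (x % n) = gcd a x := by
  rw [gcd_rec a, mod_mod_of_dvd x h, ← gcd_rec]

theorem gcd_finset_gcd_congr {ι : Type*} {a : ℕ} {s : Finset ι} {f g : ι → ℕ}
    (h : ∀ i ∈ s, gcd a (f i) = gcd a (g i)) : gcd a (s.gcd f) = gcd a (s.gcd g) := by
  refine eq_of_forall_dvd' fun e => ?_
  simp only [dvd_gcd_iff, Finset.dvd_gcd_iff]
  refine and_congr_right fun ha => forall₂_congr fun i hi => ?_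
  simpa [dvd_gcd_iff, ha] using congrArg (e ∣ ·) (h i hi)

theorem gcd_finset_gcd_mod {ι : Type*} {a n : ℕ} (h : a ∣ n) (s : Finset ι) (f : ι → ℕ) :
    gcd a (s.gcd fun i => f i % n) = gcd a (s.gcd f) :=
  gcd_finset_gcd_congr fun i _ => gcd_mod_of_dvd (f i) h

theorem gcd_prod_eq_prod_gcd {ι : Type*} {s : Finset ι} {c : ι → ℕ}
    (hco : (s : Set ι).Pairwise (Coprime on c)) (g : ℕ) :
    gcd (∏ j ∈ s, c j) g = ∏ j ∈ s, gcd (c j) g := by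
  classical
  induction s using Finset.induction_on with
  | empty => simp
  | insert j s hj ih =>
    rw [coe_insert, Set.pairwise_insert_of_symm_of_notMem (by exact_mod_cast hj)] at hco
    rw [prod_insert hj, prod_insert hj, gcd_comm, Coprime.gcd_mul _ (Coprime.prod_right hco.2),
      gcd_comm, gcd_comm g, ih hco.1]

theorem gcd_prod_eq_of_dvd {ι : Type*} [Fintype ι] {c u : ι → ℕ} (hco : Pairwise (Coprime on c))
    (hu : ∀ l, u l ∣ c l) (j : ι) : gcd (c j) (∏ l, u l) = u j := by
  classical
  rw [← mul_prod_erase univ u (mem_univ j), Coprime.gcd_mul_right_cancel_right,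
    gcd_eq_right (hu j)]
  exact Coprime.prod_left fun l hl => (hco (ne_of_mem_erase hl)).coprime_dvd_left (hu l)

theorem gcd_prod_eq_prod_iff {ι : Type*} [Fintype ι] {b c : ι → ℕ}
    (hco : Pairwise (Coprime on c)) (hbc : ∀ j, b j ∣ c j) (g : ℕ) :
    gcd (∏ j, c j) g = ∏ j, b j ↔ ∀ j, gcd (c j) g = b j := by
  refine ⟨fun h j => ?_, fun h => ?_⟩
  · rw [← gcd_prod_eq_of_dvd hco hbc j, ← h, ← gcd_assoc,
      gcd_eq_left (dvd_prod_of_mem c (mem_univ j))]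
  · rw [gcd_prod_eq_prod_gcd (hco.set_pairwise _)]
    exact prod_congr rfl fun j _ => h j

theorem eq_of_mod_eq_of_lt_prod {ι : Type*} {s : Finset ι} {d : ι → ℕ}
    (hco : (s : Set ι).Pairwise (Coprime on d)) {m n : ℕ} (hm : m < ∏ j ∈ s, d j)
    (hn : n < ∏ j ∈ s, d j) (h : ∀ j ∈ s, m % d j = n % d j) : m = n := by
  refine ModEq.eq_of_lt_of_lt ?_ hm hn
  rw [modEq_iff_dvd, cast_prod]
  exact prod_dvd_of_coprime (fun i hi j hj hij => isCoprime_iff_coprime.2 (hco hi hj hij))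
    fun j hj => modEq_iff_dvd.1 (h j hj)

theorem exists_lt_prod_mod_eq {ι : Type*} {s : Finset ι} {d : ι → ℕ}
    (hco : (s : Set ι).Pairwise (Coprime on d)) {a : ι → ℕ} (ha : ∀ j ∈ s, a j < d j) :
    ∃ n < ∏ j ∈ s, d j, ∀ j ∈ s, n % d j = a j := by
  have hd (j) (hj : j ∈ s) : d j ≠ 0 := ((zero_le _).trans_lt (ha j hj)).ne'
  let n := chineseRemainderOfFinset a d s hd hco
  exact ⟨n, chineseRemainderOfFinset_lt_prod a d hd hco,
    fun j hj => Eq.trans (n.2 j hj) (mod_eq_of_lt (ha j hj))⟩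

end Nat

namespace Finset

variable {ι α : Type*} [Fintype ι] [CommMonoidWithZero α] [NormalizedGCDMonoid α]

theorem gcd_univ_subtype (p : ι → Prop) [DecidablePred p] (f : ι → α) :
    (univ : Finset {i // p i}).gcd (fun i => f i) = (univ.filter p).gcd f := by
  classical
  rw [← subtype_map p, subtype_univ]
  simp [gcd_def]

theorem gcd_univ_comp_equiv {ι' : Type*} [Fintype ι'] (e : ι' ≃ ι) (f : ι → α) :
    univ.gcd (f ∘ e) = univ.gcd f := by
  classical rw [← gcd_image, image_univ_equiv]

end Finset

section Count

variable {ι : Type*} [Fintype ι]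

theorem jordanPhi_eq_card (n : ℕ) :
    jordanPhi (Fintype.card ι) n =
      Nat.card {r : ι → Fin n // Nat.gcd (univ.gcd fun i => (r i : ℕ)) n = 1} := by
  rw [jordanPhi, ← Fintype.card_subtype, ← Nat.card_eq_fintype_card]
  refine Nat.card_congr <| Equiv.subtypeEquiv ((Fintype.equivFin ι).arrowCongr (.refl _)).symm
    fun y => ?_
  simp only [Equiv.arrowCongr_symm, Equiv.arrowCongr_apply, Equiv.refl_symm, Equiv.coe_refl,
    Function.id_comp, Equiv.symm_symm]
  rw [← gcd_univ_comp_equiv (Fintype.equivFin ι)]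
  rfl

theorem card_fin_gcd_eq_jordanPhi {b c : ℕ} (hc : 0 < c) (hbc : b ∣ c) :
    Nat.card {y : ι → Fin c // Nat.gcd c (univ.gcd fun i => (y i : ℕ)) = b} =
      jordanPhi (Fintype.card ι) (c / b) := by
  have hb : 0 < b := Nat.pos_of_dvd_of_pos hbc hc
  have hc' : b * (c / b) = c := Nat.mul_div_cancel' hbc
  have key (r : ι → ℕ) :
      Nat.gcd c (univ.gcd fun i => b * r i) = b * Nat.gcd (univ.gcd r) (c / b) := by
    rw [Finset.gcd_mul_left, normalize_eq, ← hc', Nat.gcd_mul_left, Nat.mul_div_cancel_left _ hb,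
      Nat.gcd_comm]
  rw [jordanPhi_eq_card]
  symm
  refine Nat.card_eq_of_bijective (fun r => ⟨fun i => ⟨b * r.1 i, ?_⟩, ?_⟩) ⟨?_, ?_⟩
  · calc b * (r.1 i : ℕ) < b * (c / b) := Nat.mul_lt_mul_of_pos_left (r.1 i).2 hb
      _ = c := hc'
  · change Nat.gcd c (univ.gcd fun i => b * (r.1 i : ℕ)) = b
    rw [key, r.2, mul_one]
  · intro r r' h
    ext i
    exact Nat.eq_of_mul_eq_mul_left hb (congrArg (fun y => (y.1 i : ℕ)) h)
  · rintro ⟨y, hy⟩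
    have hdvd (i : ι) : b ∣ y i := hy ▸ (Nat.gcd_dvd_right _ _).trans (gcd_dvd (mem_univ i))
    refine ⟨⟨fun i => ⟨y i / b, Nat.div_lt_div_of_lt_of_dvd hbc (y i).2⟩, ?_⟩, ?_⟩
    · refine Nat.eq_of_mul_eq_mul_left hb ?_
      rw [← key, mul_one]
      simpa only [Nat.mul_div_cancel' (hdvd _)] using hy
    · ext i
      exact Nat.mul_div_cancel' (hdvd i)

theorem card_fin_gcd_eq_jordanPhi_mul_pow {b c d : ℕ} (hd : 0 < d) (hbc : b ∣ c) (hcd : c ∣ d) :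
    Nat.card {y : ι → Fin d // Nat.gcd c (univ.gcd fun i => (y i : ℕ)) = b} =
      jordanPhi (Fintype.card ι) (c / b) * (d / c) ^ Fintype.card ι := by
  have hc : 0 < c := Nat.pos_of_dvd_of_pos hcd hd
  let e : Fin d ≃ Fin c × Fin (d / c) :=
    (finCongr (Nat.div_mul_cancel hcd).symm).trans (finProdFinEquiv.symm.trans (.prodComm _ _))
  have he (y : Fin d) : ((e y).1 : ℕ) = y % c := by simp [e]
  let E : {y : ι → Fin d // Nat.gcd c (univ.gcd fun i => (y i : ℕ)) = b} ≃
      {z : ι → Fin c // Nat.gcd c (univ.gcd fun i => (z i : ℕ)) = b} × (ι → Fin (d / c)) :=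
    (Equiv.subtypeEquiv ((Equiv.arrowCongr (.refl ι) e).trans (Equiv.arrowProdEquivProdArrow ..))
      fun y => by simp [he, Nat.gcd_finset_gcd_mod]).trans Equiv.prodSubtypeFstEquivSubtypeProd
  rw [Nat.card_congr E, Nat.card_prod, card_fin_gcd_eq_jordanPhi hc hbc, Nat.card_fun]
  simp

end Count

section LinearOrder

variable {ι : Type*} [Fintype ι] [LinearOrder ι]

theorem gcd_finset_gcd_mul_prod_filter_lt {c : ι → ℕ} (hco : Pairwise (Nat.Coprime on c))
    (x : ι → ℕ) (j : ι) :
    Nat.gcd (c j) (univ.gcd fun i => x i * ∏ l ∈ univ.filter (i < ·), c l) =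
      Nat.gcd (c j) ((univ.filter (j ≤ ·)).gcd x) := by
  refine eq_of_forall_dvd' fun e => ?_
  simp only [Nat.dvd_gcd_iff, Finset.dvd_gcd_iff, mem_univ, mem_filter, true_and, forall_const]
  refine and_congr_right fun he => forall_congr' fun i => ?_
  rcases le_or_gt j i with hji | hij
  · have : Nat.Coprime e (∏ l ∈ univ.filter (i < ·), c l) := Nat.Coprime.prod_right fun l hl =>
      (hco (hji.trans_lt (mem_filter.1 hl).2).ne).coprime_dvd_left he
    simp [hji, this.dvd_mul_right]
  · have : c j ∣ ∏ l ∈ univ.filter (i < ·), c l := dvd_prod_of_mem c (by simpa using hij)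
    simp [not_le.2 hij, (he.trans this).mul_left]

theorem card_box_gcd_eq_prod_card_residues {d c b : ι → ℕ} (hd : ∀ i, 0 < d i)
    (hco : Pairwise (Nat.Coprime on d)) (hcd : ∀ i, c i ∣ d i) :
    Nat.card {x : ι → ℕ // (∀ i, x i < ∏ j ∈ univ.filter (· ≤ i), d j) ∧
        ∀ j, Nat.gcd (c j) ((univ.filter (j ≤ ·)).gcd x) = b j} =
      ∏ j, Nat.card {y : {i // j ≤ i} → Fin (d j) //
        Nat.gcd (c j) (univ.gcd fun i => (y i : ℕ)) = b j} := by
  have hres (x : ι → ℕ) (j : ι) :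
      Nat.gcd (c j) (univ.gcd fun i : {i // j ≤ i} => x i % d j) =
        Nat.gcd (c j) ((univ.filter (j ≤ ·)).gcd x) := by
    rw [Nat.gcd_finset_gcd_mod (hcd j), gcd_univ_subtype]
  rw [← Nat.card_pi]
  refine Nat.card_eq_of_bijective (fun x j => ⟨fun i => ⟨x.1 i % d j, Nat.mod_lt _ (hd j)⟩,
    (hres x.1 j).trans (x.2.2 j)⟩) ⟨?_, fun Y => ?_⟩
  · intro x x' h
    ext i
    exact Nat.eq_of_mod_eq_of_lt_prod (hco.set_pairwise _) (x.2.1 i) (x'.2.1 i) fun j hj =>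
      Fin.ext_iff.1 (congrFun (Subtype.ext_iff.1 (congrFun h j)) ⟨i, (mem_filter.1 hj).2⟩)
  · have (i : ι) := Nat.exists_lt_prod_mod_eq (hco.set_pairwise (univ.filter (· ≤ i)))
      (a := fun j => if h : j ≤ i then (Y j).1 ⟨i, h⟩ else 0)
      fun j hj => by simp [(mem_filter.1 hj).2]
    choose x hx hmod using this
    have hmod' (j : ι) (i : {i // j ≤ i}) : x i % d j = (Y j).1 i := by
      simpa [i.2] using hmod i j (by simpa using i.2)
    refine ⟨⟨x, hx, fun j => ?_⟩,
      funext fun j => Subtype.ext (funext fun i => Fin.ext (hmod' j i))⟩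
    rw [← hres]
    simpa only [hmod'] using (Y j).2

end LinearOrder

/-- **counting lemma.** For pairwise coprime positive `d₁,…,d_k` and
`bᵢ ∣ cᵢ ∣ dᵢ`, the number of tuples `(x₁,…,x_k)` with `0 ≤ xᵢ < d₁⋯dᵢ` and
`gcd(c₁⋯c_k, x₁·c₂⋯c_k, …, x_{k-1}·c_k, x_k) = b₁⋯b_k` equals
`∏ᵢ φ_{k+1-i}(cᵢ/bᵢ)·(dᵢ/cᵢ)^{k+1-i}`. -/
theorem counting_lemma (k : ℕ) (d c b : Fin k → ℕ)
    (hd : ∀ i, 0 < d i)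
    (hcop : ∀ i j, i ≠ j → Nat.Coprime (d i) (d j))
    (hbc : ∀ i, b i ∣ c i) (hcd : ∀ i, c i ∣ d i) :
    Nat.card {x : Fin k → ℕ //
        (∀ i, x i < ∏ j ∈ Finset.univ.filter (fun j => j ≤ i), d j) ∧
        Nat.gcd (∏ j, c j)
            (Finset.univ.gcd fun i =>
              x i * ∏ j ∈ Finset.univ.filter (fun j => i < j), c j)
          = ∏ i, b i} =
      ∏ i : Fin k, jordanPhi (k - i.val) (c i / b i) * (d i / c i) ^ (k - i.val) := by
  have hcopc : Pairwise (Nat.Coprime on c) := fun i j hij =>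
    ((hcop i j hij).coprime_dvd_left (hcd i)).coprime_dvd_right (hcd j)
  simp_rw [Nat.gcd_prod_eq_prod_iff hcopc hbc, gcd_finset_gcd_mul_prod_filter_lt hcopc]
  rw [card_box_gcd_eq_prod_card_residues hd hcop hcd]
  refine prod_congr rfl fun j _ => ?_
  rw [card_fin_gcd_eq_jordanPhi_mul_pow (hd j) (hbc j) (hcd j), Fintype.card_subtype,
    filter_le_eq_Ici, Fin.card_Ici]
end
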